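/- arXiv:2404.01001 — 2 statements merged into one kernel-verified Lean document; each statement's English description precedes it below -/
import Mathlib

section
/- Let Δ_{3k-1} be the clique complex of the complement of the path P_{3k-1}. Then a subset F = {i_1 < ... < i_k} ⊆ [3k-1] with pairwise gaps ≥ 2 is a facet of Δ_{3k-1} of cardinality k if and only if i_1 ≤ 2, i_k ≥ 3k-2, and all consecutive gaps are ≤ 3; consequently the number of facets of cardinality k is exactly k+1. -/
/-!
Facets of `Δ_n` are the maximal independent sets of the path `P_n`, i.e. the independent sets
that dominate `P_n`. For `e_0 < ⋯ < e_{k-1}` this means `e_0 ≤ 2`, `e_{k-1} ≥ n - 1` and every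
gap `e_{m+1} - e_m` is `2` or `3`. When `n = 3k - 1`, gaps of at most `3` counted from both
ends force `e_m ∈ {3m + 1, 3m + 2}`, and then `e_m = 3m + 1` forces `e_{m+1} = 3(m + 1) + 1`.
So a facet with `k` elements is determined by the first index `j ∈ {0, …, k}` with
`e_j = 3j + 1`, which gives `k + 1` facets.
-/

open Finset

attribute [local instance] Classical.propDecidable

/-- `s` is a face of the clique complex `Δ_n = Δ(P_nᶜ)` of the complement of the path
`P_n` on `[n] = {1, …, n}`: a subset of `[n]` whose elements have pairwise differences
at least 2. -/
def isFaceP (n : ℕ) (s : Finset ℕ) : Prop :=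
  s ⊆ Finset.Icc 1 n ∧ ∀ i ∈ s, ∀ j ∈ s, i < j → i + 2 ≤ j

/-- `s` is a facet (maximal face) of `Δ_n = Δ(P_nᶜ)`. -/
def isFacetP (n : ℕ) (s : Finset ℕ) : Prop :=
  isFaceP n s ∧ ∀ t, isFaceP n t → s ⊆ t → t = s

def IsDominatingP (n : ℕ) (s : Finset ℕ) : Prop :=
  ∀ x ∈ Icc 1 n, ∃ y ∈ s, x ≤ y + 1 ∧ y ≤ x + 1

section Facets

variable {n : ℕ} {s : Finset ℕ}

theorem isFaceP_insert {x : ℕ} (hs : isFaceP n s) (hx : x ∈ Icc 1 n)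
    (hfar : ∀ y ∈ s, x + 2 ≤ y ∨ y + 2 ≤ x) : isFaceP n (insert x s) := by
  refine ⟨insert_subset hx hs.1, ?_⟩
  simp only [mem_insert]
  rintro i (rfl | hi) j (rfl | hj) hij
  · omega
  · have := hfar j hj; omega
  · have := hfar i hi; omega
  · exact hs.2 i hi j hj hij

theorem isFacetP_iff : isFacetP n s ↔ isFaceP n s ∧ IsDominatingP n s := by
  refine and_congr_right fun hs => ⟨fun hmax x hx => ?_, fun hdom t ht hst => ?_⟩
  · by_contra! hfar
    have hins := hmax _ (isFaceP_insert hs hx fun y hy => by have := hfar y hy; omega)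
      (subset_insert x s)
    have hxs : x ∈ s := hins ▸ mem_insert_self x s
    have := hfar x hxs
    omega
  · refine subset_antisymm (fun x hxt => ?_) hst
    obtain ⟨y, hys, hxy⟩ := hdom x (ht.1 hxt)
    obtain rfl : x = y := by
      rcases lt_trichotomy x y with h | h | h
      · have := ht.2 x hxt y (hst hys) h; omega
      · exact h
      · have := ht.2 y (hst hys) x hxt h; omega
    exact hys

theorem exists_consecutive_around {x a b : ℕ} (hx : x ∉ s) (ha : a ∈ s) (hax : a < x)
    (hb : b ∈ s) (hxb : x < b) :
    ∃ i ∈ s, ∃ j ∈ s, i < x ∧ x < j ∧ ∀ l ∈ s, ¬(i < l ∧ l < j) := by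
  have hbelow : (s.filter (· < x)).Nonempty := ⟨a, mem_filter.2 ⟨ha, hax⟩⟩
  have habove : (s.filter (x < ·)).Nonempty := ⟨b, mem_filter.2 ⟨hb, hxb⟩⟩
  obtain ⟨hi, hix⟩ := mem_filter.1 (max'_mem _ hbelow)
  obtain ⟨hj, hxj⟩ := mem_filter.1 (min'_mem _ habove)
  refine ⟨_, hi, _, hj, hix, hxj, fun l hl ⟨hil, hlj⟩ => ?_⟩
  rcases lt_trichotomy l x with h | rfl | h
  · exact (le_max' _ l (mem_filter.2 ⟨hl, h⟩)).not_gt hil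
  · exact hx hl
  · exact (min'_le _ l (mem_filter.2 ⟨hl, h⟩)).not_gt hlj

theorem isDominatingP_iff (hn : 1 ≤ n) (hsub : s ⊆ Icc 1 n) :
    IsDominatingP n s ↔ (∃ x ∈ s, x ≤ 2) ∧ (∃ x ∈ s, n - 1 ≤ x) ∧
      ∀ i ∈ s, ∀ j ∈ s, i < j → (∀ l ∈ s, ¬(i < l ∧ l < j)) → j ≤ i + 3 := by
  constructor
  · intro hdom
    refine ⟨?_, ?_, fun i hi j hj hij hcons => ?_⟩
    · obtain ⟨y, hy, h⟩ := hdom 1 (mem_Icc.2 ⟨le_rfl, hn⟩)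
      exact ⟨y, hy, by omega⟩
    · obtain ⟨y, hy, h⟩ := hdom n (mem_Icc.2 ⟨hn, le_rfl⟩)
      exact ⟨y, hy, by omega⟩
    · by_contra! hgap
      have hjn := (mem_Icc.1 (hsub hj)).2
      obtain ⟨y, hy, h⟩ := hdom (i + 2) (mem_Icc.2 ⟨by omega, by omega⟩)
      exact hcons y hy ⟨by omega, by omega⟩
  · rintro ⟨⟨a, ha, ha2⟩, ⟨b, hb, hbn⟩, hgap⟩ x hx
    rw [mem_Icc] at hx
    by_cases hxs : x ∈ s
    · exact ⟨x, hxs, by omega, by omega⟩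
    by_cases hax : a < x
    · by_cases hxb : x < b
      · obtain ⟨i, hi, j, hj, hix, hxj, hcons⟩ := exists_consecutive_around hxs ha hax hb hxb
        have := hgap i hi j hj (hix.trans hxj) hcons
        by_cases h : x ≤ i + 1
        · exact ⟨i, hi, by omega, by omega⟩
        · exact ⟨j, hj, by omega, by omega⟩
      · exact ⟨b, hb, by omega, by omega⟩
    · exact ⟨a, ha, by omega, by omega⟩

end Facets

section SortedSets

variable {n k : ℕ} {e : ℕ → ℕ}

theorem exists_strictMonoOn_image_range {s : Finset ℕ} (hs : #s = k) :
    ∃ e : ℕ → ℕ, StrictMonoOn e (Set.Iio k) ∧ (range k).image e = s := by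
  subst hs
  have hf : (Set.ofPred (· ∈ s)).Finite := s.finite_toSet
  have hcard : #hf.toFinset = #s := by
    congr 1
    ext
    simp [Set.ofPred]
  refine ⟨Nat.nth (· ∈ s), hcard ▸ Nat.nth_strictMonoOn hf, coe_injective ?_⟩
  push_cast
  rw [← hcard, Nat.image_nth_Iio_card hf]
  rfl

theorem exists_mem_image_range_le_iff (hk : 0 < k) (he : StrictMonoOn e (Set.Iio k)) {c : ℕ} :
    (∃ x ∈ (range k).image e, x ≤ c) ↔ e 0 ≤ c := by
  simp only [mem_image, mem_range, exists_exists_and_eq_and]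
  refine ⟨fun ⟨m, hm, hmc⟩ => ?_, fun h => ⟨0, hk, h⟩⟩
  exact ((he.le_iff_le hk hm).2 m.zero_le).trans hmc

theorem exists_mem_image_range_ge_iff (hk : 0 < k) (he : StrictMonoOn e (Set.Iio k)) {c : ℕ} :
    (∃ x ∈ (range k).image e, c ≤ x) ↔ c ≤ e (k - 1) := by
  simp only [mem_image, mem_range, exists_exists_and_eq_and]
  refine ⟨fun ⟨m, hm, hcm⟩ => ?_, fun h => ⟨k - 1, by omega, h⟩⟩
  exact hcm.trans ((he.le_iff_le hm (Set.mem_Iio.2 (by omega))).2 (by omega))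

theorem image_range_subset_Icc_iff (hk : 0 < k) (he : StrictMonoOn e (Set.Iio k)) {a b : ℕ} :
    (range k).image e ⊆ Icc a b ↔ a ≤ e 0 ∧ e (k - 1) ≤ b := by
  simp only [subset_iff, forall_mem_image, mem_range, mem_Icc]
  refine ⟨fun h => ⟨(h hk).1, (h (show k - 1 < k by omega)).2⟩, fun ⟨h0, hlast⟩ m hm => ⟨?_, ?_⟩⟩
  · exact h0.trans ((he.le_iff_le hk hm).2 m.zero_le)
  · exact ((he.le_iff_le hm (Set.mem_Iio.2 (by omega))).2 (by omega)).trans hlast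

theorem forall_not_between_iff (he : StrictMonoOn e (Set.Iio k)) {a b : ℕ} (ha : a < k)
    (hb : b < k) : (∀ ⦃p⦄, p < k → ¬(e a < e p ∧ e p < e b)) ↔ b ≤ a + 1 := by
  constructor
  · intro h
    by_contra! hab
    have ha1 : a + 1 ∈ Set.Iio k := Set.mem_Iio.2 (by omega)
    exact h ha1 ⟨he ha ha1 (by omega), he ha1 hb hab⟩
  · rintro hab p hp ⟨hap, hpb⟩
    have := (he.lt_iff_lt ha hp).1 hap
    have := (he.lt_iff_lt hp hb).1 hpb
    omega

theorem forall_mem_image_range_lt_imp_add_le_iff (he : StrictMonoOn e (Set.Iio k)) {c : ℕ} :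
    (∀ i ∈ (range k).image e, ∀ j ∈ (range k).image e, i < j → i + c ≤ j) ↔
      ∀ m, m + 1 < k → e m + c ≤ e (m + 1) := by
  simp only [forall_mem_image, mem_range]
  constructor
  · intro h m hm
    exact h (by omega) hm (he (Set.mem_Iio.2 (by omega)) hm (by omega))
  · intro h a ha b hb hab
    have hab := (he.lt_iff_lt ha hb).1 hab
    exact (h a (by omega)).trans ((he.le_iff_le (Set.mem_Iio.2 (by omega)) hb).2 hab)

theorem forall_consecutive_image_range_le_add_iff (he : StrictMonoOn e (Set.Iio k)) {c : ℕ} :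
    (∀ i ∈ (range k).image e, ∀ j ∈ (range k).image e, i < j →
        (∀ l ∈ (range k).image e, ¬(i < l ∧ l < j)) → j ≤ i + c) ↔
      ∀ m, m + 1 < k → e (m + 1) ≤ e m + c := by
  simp only [forall_mem_image, mem_range]
  constructor
  · intro h m hm
    exact h (by omega) hm (he (Set.mem_Iio.2 (by omega)) hm (by omega))
      ((forall_not_between_iff he (by omega) hm).2 le_rfl)
  · intro h a ha b hb hab hcons
    have hab := (he.lt_iff_lt ha hb).1 hab
    obtain rfl : b = a + 1 := by
      have := (forall_not_between_iff he ha hb).1 hcons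
      omega
    exact h a hb

theorem isFaceP_image_range_iff (hk : 0 < k) (he : StrictMonoOn e (Set.Iio k)) :
    isFaceP n ((range k).image e) ↔
      (1 ≤ e 0 ∧ e (k - 1) ≤ n) ∧ ∀ m, m + 1 < k → e m + 2 ≤ e (m + 1) :=
  and_congr (image_range_subset_Icc_iff hk he) (forall_mem_image_range_lt_imp_add_le_iff he)

theorem isDominatingP_image_range_iff (hn : 1 ≤ n) (hk : 0 < k) (he : StrictMonoOn e (Set.Iio k))
    (hsub : (range k).image e ⊆ Icc 1 n) :
    IsDominatingP n ((range k).image e) ↔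
      e 0 ≤ 2 ∧ n - 1 ≤ e (k - 1) ∧ ∀ m, m + 1 < k → e (m + 1) ≤ e m + 3 := by
  rw [isDominatingP_iff hn hsub, exists_mem_image_range_le_iff hk he,
    exists_mem_image_range_ge_iff hk he, forall_consecutive_image_range_le_add_iff he]

theorem isFacetP_image_range_iff (hn : 1 ≤ n) (hk : 0 < k) (he : StrictMonoOn e (Set.Iio k)) :
    isFacetP n ((range k).image e) ↔
      (1 ≤ e 0 ∧ e 0 ≤ 2) ∧ (n - 1 ≤ e (k - 1) ∧ e (k - 1) ≤ n) ∧
        ∀ m, m + 1 < k → e m + 2 ≤ e (m + 1) ∧ e (m + 1) ≤ e m + 3 := by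
  rw [isFacetP_iff]
  constructor
  · rintro ⟨hface, hdom⟩
    obtain ⟨⟨h0, hlast⟩, hsep⟩ := (isFaceP_image_range_iff hk he).1 hface
    obtain ⟨h0', hlast', hgap⟩ := (isDominatingP_image_range_iff hn hk he hface.1).1 hdom
    exact ⟨⟨h0, h0'⟩, ⟨hlast', hlast⟩, fun m hm => ⟨hsep m hm, hgap m hm⟩⟩
  · rintro ⟨⟨h0, h0'⟩, ⟨hlast', hlast⟩, hgap⟩
    have hface := (isFaceP_image_range_iff hk he).2 ⟨⟨h0, hlast⟩, fun m hm => (hgap m hm).1⟩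
    exact ⟨hface, (isDominatingP_image_range_iff hn hk he hface.1).2
      ⟨h0', hlast', fun m hm => (hgap m hm).2⟩⟩

end SortedSets

section FacetsOfSizeK

/-- The `m`-th element, from `m = 0`, of
`facetSet k j = {2, 5, …, 3j - 1} ∪ {3j + 1, 3j + 4, …, 3k - 2}`. -/
def facetSeq (j m : ℕ) : ℕ := if m < j then 3 * m + 2 else 3 * m + 1

def facetSet (k j : ℕ) : Finset ℕ := (range k).image (facetSeq j)

theorem facetSeq_strictMono (j : ℕ) : StrictMono (facetSeq j) := by
  intro a b hab
  unfold facetSeq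
  split_ifs <;> omega

theorem card_facetSet (k j : ℕ) : #(facetSet k j) = k := by
  rw [facetSet, card_image_of_injective _ (facetSeq_strictMono j).injective, card_range]

theorem facetSet_isFacetP {k : ℕ} (hk : 0 < k) (j : ℕ) : isFacetP (3 * k - 1) (facetSet k j) := by
  refine (isFacetP_image_range_iff (by omega) hk ((facetSeq_strictMono j).strictMonoOn _)).2 ?_
  unfold facetSeq
  exact ⟨by split_ifs <;> omega, by split_ifs <;> omega, fun m hm => by split_ifs <;> omega⟩

theorem facetSet_injOn (k : ℕ) : Set.InjOn (facetSet k) (range (k + 1) : Set ℕ) := by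
  intro a ha b hb hab
  simp only [coe_range, Set.mem_Iio] at ha hb
  by_contra hne
  wlog hlt : a < b generalizing a b
  · exact this hab.symm hb ha (Ne.symm hne) (by omega)
  have hmem : facetSeq b a ∈ facetSet k a := hab ▸ mem_image_of_mem _ (mem_range.2 (by omega))
  obtain ⟨m, -, hm⟩ := mem_image.1 hmem
  unfold facetSeq at hm
  split_ifs at hm <;> omega

theorem le_add_mul_sub_of_succ_le_add {k c : ℕ} {e : ℕ → ℕ}
    (hgap : ∀ m, m + 1 < k → e (m + 1) ≤ e m + c) {a b : ℕ} (hab : a ≤ b) (hb : b < k) :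
    e b ≤ e a + c * (b - a) := by
  induction b, hab using Nat.le_induction with
  | base => simp
  | succ b hab ih =>
    have := hgap b hb
    have := ih (by omega)
    rw [Nat.sub_add_comm hab, mul_add_one]
    omega

theorem exists_eq_facetSeq {k : ℕ} {e : ℕ → ℕ} (h0 : e 0 ≤ 2) (hlast : 3 * k - 2 ≤ e (k - 1))
    (hstep : ∀ m, m + 1 < k → e (m + 1) ≤ e m + 3) :
    ∃ j ≤ k, ∀ m < k, e m = facetSeq j m := by
  have hbounds : ∀ m < k, 3 * m + 1 ≤ e m ∧ e m ≤ 3 * m + 2 := fun m hm => by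
    have := le_add_mul_sub_of_succ_le_add hstep m.zero_le hm
    have := le_add_mul_sub_of_succ_le_add hstep (show m ≤ k - 1 by omega) (by omega)
    omega
  have hex : ∃ j, k ≤ j ∨ e j ≠ 3 * j + 2 := ⟨k, Or.inl le_rfl⟩
  set j := Nat.find hex
  have hafter : ∀ m, j ≤ m → m < k → e m = 3 * m + 1 := by
    intro m hjm
    induction m, hjm using Nat.le_induction with
    | base =>
      intro hj
      have hspec : k ≤ j ∨ e j ≠ 3 * j + 2 := Nat.find_spec hex
      have := hbounds j hj
      omega
    | succ m hjm ih =>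
      intro hm
      have := ih (by omega)
      have := hstep m hm
      have := hbounds (m + 1) hm
      omega
  refine ⟨j, Nat.find_le (Or.inl le_rfl), fun m hm => ?_⟩
  unfold facetSeq
  split_ifs with hmj
  · have := Nat.find_min hex hmj
    omega
  · exact hafter m (by omega) hm

theorem eq_facetSet_of_isFacetP {k : ℕ} (hk : 0 < k) {s : Finset ℕ}
    (hs : isFacetP (3 * k - 1) s) (hcard : #s = k) : ∃ j ≤ k, s = facetSet k j := by
  obtain ⟨e, he, rfl⟩ := exists_strictMonoOn_image_range hcard
  obtain ⟨⟨-, h0⟩, ⟨hlast, -⟩, hgap⟩ := (isFacetP_image_range_iff (by omega) hk he).1 hs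
  obtain ⟨j, hj, hej⟩ := exists_eq_facetSeq h0 (by omega) fun m hm => (hgap m hm).2
  exact ⟨j, hj, image_congr fun m hm => hej m (mem_range.1 hm)⟩

theorem filter_isFacetP_card_eq_image_facetSet {k : ℕ} (hk : 0 < k) :
    (Icc 1 (3 * k - 1)).powerset.filter (fun s => isFacetP (3 * k - 1) s ∧ #s = k) =
      (range (k + 1)).image (facetSet k) := by
  ext s
  simp only [mem_filter, mem_powerset, mem_image, mem_range, Nat.lt_succ_iff]
  constructor
  · rintro ⟨-, hs, hcard⟩
    exact eq_facetSet_of_isFacetP hk hs hcard |>.imp fun j ⟨hj, hs⟩ => ⟨hj, hs.symm⟩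
  · rintro ⟨j, -, rfl⟩
    exact ⟨(facetSet_isFacetP hk j).1.1, facetSet_isFacetP hk j, card_facetSet k j⟩

end FacetsOfSizeK

/-- A `k`-element face `F = {i_1 < … < i_k}` of `Δ_{3k-1}` is a facet if and only if
`i_1 ≤ 2`, `i_k ≥ 3k-2`, and all consecutive gaps are at most 3; consequently `Δ_{3k-1}`
has exactly `k + 1` facets of cardinality `k`. -/
theorem facets_card_k_of_path3k_sub_one (k : ℕ) (hk : 1 ≤ k) :
    (∀ s : Finset ℕ, isFaceP (3 * k - 1) s → s.card = k →
      (isFacetP (3 * k - 1) s ↔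
        ((∃ x ∈ s, x ≤ 2) ∧ (∃ x ∈ s, 3 * k - 2 ≤ x) ∧
          ∀ i ∈ s, ∀ j ∈ s, i < j → (∀ l ∈ s, ¬(i < l ∧ l < j)) → j ≤ i + 3))) ∧
      ((Finset.Icc 1 (3 * k - 1)).powerset.filter fun s =>
          isFacetP (3 * k - 1) s ∧ s.card = k).card = k + 1 := by
  refine ⟨fun s hs _ => ?_, ?_⟩
  · rw [isFacetP_iff, and_iff_right hs, isDominatingP_iff (by omega) hs.1,
      show 3 * k - 2 = 3 * k - 1 - 1 by omega]
  · rw [filter_isFacetP_card_eq_image_facetSet hk, card_image_of_injOn (facetSet_injOn k),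
      card_range]
end

section
/- Let Δ_{3k+1} be the clique complex of the complement of P_{3k+1}. The number of faces F with |F| = k that are contained in some facet of cardinality k+1 but in no facet of cardinality greater than k+1 is (k+1)^2; the number of such faces with |F| = k-1 is k(k+1)/2; and every face with |F| = k-2 is contained in a facet of cardinality greater than k+1. -/
open Finset

attribute [local instance] Classical.propDecidable

/-!
A face `F = {a₁ < ⋯ < a_m}` of `Δ_n` is determined by its gap vector
`(a₁ - 1, a₂ - a₁ - 2, …, a_m - a_{m-1} - 2, n - a_m)`, which can be any `(m+1)`-tuple of
naturals with sum `n + 1 - 2m`. A gap `g` has room for exactly `⌊g/2⌋` further vertices, so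
the largest faces containing `F` have `|F| + ∑ ⌊gᵢ/2⌋` elements. Facets therefore have all gaps
`≤ 1`, so every facet of `Δ_{3k+1}` has at least `k + 1` elements, and the faces counted are
those with `|F| + ∑ ⌊gᵢ/2⌋ ≤ k + 1`. As `∑ gᵢ ≤ (m + 1) + 2 ∑ ⌊gᵢ/2⌋`, this forces
`∑ ⌊gᵢ/2⌋ = 1` when `|F| = k` and `= 2` when `|F| = k - 1`, and it fails for `|F| = k - 2`.
Tuples of length `L` with sum `S` and `∑ ⌊gᵢ/2⌋ = t` are counted by choosing the `S - 2t` odd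
entries and distributing `t` among the halves: `C(L, S - 2t) · C(L + t - 1, t)`.
-/

def Separated (s : Finset ℕ) : Prop :=
  ∀ i ∈ s, ∀ j ∈ s, i < j → i + 2 ≤ j

lemma isFaceP_iff {n : ℕ} {s : Finset ℕ} : isFaceP n s ↔ s ⊆ Icc 1 n ∧ Separated s := Iff.rfl

namespace Separated

variable {s t : Finset ℕ}

lemma mono (hs : Separated s) (h : t ⊆ s) : Separated t :=
  fun i hi j hj => hs i (h hi) j (h hj)

lemma singleton (a : ℕ) : Separated {a} := by
  simp [Separated]

lemma union (hs : Separated s) (ht : Separated t) (hst : ∀ x ∈ s, ∀ y ∈ t, x + 2 ≤ y) :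
    Separated (s ∪ t) := by
  intro i hi j hj hij
  rcases mem_union.1 hi with hi | hi <;> rcases mem_union.1 hj with hj | hj
  · exact hs i hi j hj hij
  · exact hst i hi j hj
  · have := hst j hj i hi; omega
  · exact ht i hi j hj hij

-- `x ↦ (x - lo) / 2` is injective on a separated set
lemma card_le (hs : Separated s) {lo top : ℕ} (h : ∀ x ∈ s, lo ≤ x ∧ x + 2 ≤ top) :
    #s ≤ (top - lo) / 2 := by
  have key : #s ≤ #(range ((top - lo) / 2)) := by
    refine card_le_card_of_injOn (fun x => (x - lo) / 2) (fun x hx => ?_) (fun x hx y hy hxy => ?_)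
    · have := h x hx
      simp only [coe_range, Set.mem_Iio]
      omega
    · beta_reduce at hxy
      have hx' := h x hx
      have hy' := h y hy
      rcases lt_trichotomy x y with hlt | rfl | hlt
      · have := hs x hx y hy hlt; omega
      · rfl
      · have := hs y hy x hx hlt; omega
  simpa using key

end Separated

lemma exists_separated_card_eq (lo top : ℕ) :
    ∃ s, Separated s ∧ (∀ x ∈ s, lo ≤ x ∧ x + 2 ≤ top) ∧ #s = (top - lo) / 2 := by
  refine ⟨(range ((top - lo) / 2)).image (fun t => lo + 2 * t), ?_, ?_, ?_⟩
  · simp only [Separated, mem_image, mem_range]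
    rintro _ ⟨t, -, rfl⟩ _ ⟨u, -, rfl⟩ h
    omega
  · simp only [mem_image, mem_range]
    rintro _ ⟨t, ht, rfl⟩
    omega
  · rw [card_image_of_injective _ (fun t u h => by omega), card_range]

/- A face is handled through its increasing list of elements, placed between the sentinels
`lo - 2` and `top` (for `Δ_n`: `lo = 1`, `top = n + 2`); `gaps` records each difference to the
previous element minus 2, the last one being measured to `top`. -/
def SpacedIn : ℕ → ℕ → List ℕ → Prop
  | lo, top, [] => lo ≤ top
  | lo, top, a :: l => lo ≤ a ∧ SpacedIn (a + 2) top l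

def gaps (lo top : ℕ) : List ℕ → List ℕ
  | [] => [top - lo]
  | a :: l => (a - lo) :: gaps (a + 2) top l

def ofGaps (lo : ℕ) : List ℕ → List ℕ
  | [] | [_] => []
  | g :: g' :: gs => (lo + g) :: ofGaps (lo + g + 2) (g' :: gs)

lemma spacedIn_iff {lo top : ℕ} {l : List ℕ} :
    SpacedIn lo top l ↔
      lo ≤ top ∧ (∀ x ∈ l, lo ≤ x ∧ x + 2 ≤ top) ∧ l.Pairwise (fun a b => a + 2 ≤ b) := by
  induction l generalizing lo with
  | nil => simp [SpacedIn]
  | cons a l ih =>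
    simp only [SpacedIn, ih, List.mem_cons, forall_eq_or_imp, List.pairwise_cons]
    constructor
    · rintro ⟨hla, hatop, hl, hpw⟩
      exact ⟨by omega, ⟨⟨hla, by omega⟩, fun x hx => ⟨by have := hl x hx; omega, (hl x hx).2⟩⟩,
        fun x hx => (hl x hx).1, hpw⟩
    · rintro ⟨-, ⟨⟨hla, hatop⟩, hl⟩, hal, hpw⟩
      exact ⟨hla, by omega, fun x hx => ⟨hal x hx, (hl x hx).2⟩, hpw⟩

lemma length_gaps (lo top : ℕ) (l : List ℕ) : (gaps lo top l).length = l.length + 1 := by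
  induction l generalizing lo with
  | nil => rfl
  | cons a l ih => simp [gaps, ih]

lemma gaps_ne_nil (lo top : ℕ) (l : List ℕ) : gaps lo top l ≠ [] := by
  cases l <;> simp [gaps]

namespace SpacedIn

variable {lo top : ℕ} {l : List ℕ}

lemma le (h : SpacedIn lo top l) : lo ≤ top := (spacedIn_iff.1 h).1

lemma sum_gaps (h : SpacedIn lo top l) : lo + (gaps lo top l).sum + 2 * l.length = top := by
  induction l generalizing lo with
  | nil =>
    simp only [SpacedIn] at h
    simp only [gaps, List.sum_cons, List.sum_nil, List.length_nil]
    omega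
  | cons a l ih =>
    have := ih h.2
    simp only [gaps, List.sum_cons, List.length_cons]
    have := h.1
    omega

lemma ofGaps_gaps (h : SpacedIn lo top l) : ofGaps lo (gaps lo top l) = l := by
  induction l generalizing lo with
  | nil => rfl
  | cons a l ih =>
    obtain ⟨g, gs, hg⟩ := List.exists_cons_of_ne_nil (gaps_ne_nil (a + 2) top l)
    have hla : lo + (a - lo) = a := by have := h.1; omega
    rw [gaps, hg, ofGaps, hla, ← hg, ih h.2]

lemma exists_superset_card_eq (h : SpacedIn lo top l) :
    ∃ G, Separated G ∧ (∀ x ∈ G, lo ≤ x ∧ x + 2 ≤ top) ∧ l.toFinset ⊆ G ∧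
      #G = l.length + ((gaps lo top l).map (· / 2)).sum := by
  induction l generalizing lo with
  | nil =>
    obtain ⟨G, hG, hwin, hcard⟩ := exists_separated_card_eq lo top
    exact ⟨G, hG, hwin, by simp, by simp [gaps, hcard]⟩
  | cons a l ih =>
    obtain ⟨P, hP, hPwin, hPcard⟩ := exists_separated_card_eq lo a
    obtain ⟨G, hG, hGwin, hlG, hGcard⟩ := ih h.2
    refine ⟨P ∪ ({a} ∪ G), hP.union ((Separated.singleton a).union hG ?_) ?_, ?_, ?_, ?_⟩
    · simp only [mem_singleton, forall_eq]
      exact fun y hy => (hGwin y hy).1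
    · intro x hx y hy
      rcases mem_union.1 hy with hy | hy
      · rw [mem_singleton.1 hy]; exact (hPwin x hx).2
      · have := hPwin x hx; have := hGwin y hy; omega
    · have := h.1
      have := h.2.le
      intro x hx
      rcases mem_union.1 hx with hx | hx
      · have := hPwin x hx; omega
      rcases mem_union.1 hx with hx | hx
      · rw [mem_singleton.1 hx]; omega
      · have := hGwin x hx; omega
    · rw [List.toFinset_cons]
      exact insert_subset (by simp) (hlG.trans fun x hx => by simp [hx])
    · rw [card_union_of_disjoint, card_union_of_disjoint, hPcard, hGcard]
      · simp only [gaps, List.map_cons, List.sum_cons, List.length_cons, card_singleton]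
        ring
      · exact disjoint_singleton_left.2 fun ha => by have := hGwin a ha; omega
      · rw [disjoint_left]
        intro x hx hx'
        have := hPwin x hx
        rcases mem_union.1 hx' with hx' | hx'
        · rw [mem_singleton.1 hx'] at this; omega
        · have := hGwin x hx'; omega

lemma card_le_of_superset (h : SpacedIn lo top l) {G : Finset ℕ} (hG : Separated G)
    (hGwin : ∀ x ∈ G, lo ≤ x ∧ x + 2 ≤ top) (hlG : l.toFinset ⊆ G) :
    #G ≤ l.length + ((gaps lo top l).map (· / 2)).sum := by
  induction l generalizing lo G with
  | nil => simpa [gaps] using hG.card_le hGwin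
  | cons a l ih =>
    have haG : a ∈ G := hlG (by simp)
    have hbelow : #(G.filter (· < a)) ≤ (a - lo) / 2 :=
      (hG.mono (filter_subset _ _)).card_le fun x hx => by
        rw [mem_filter] at hx
        exact ⟨(hGwin x hx.1).1, hG x hx.1 a haG hx.2⟩
    have habove : #(G.filter (a < ·)) ≤ l.length + ((gaps (a + 2) top l).map (· / 2)).sum := by
      refine ih h.2 (hG.mono (filter_subset _ _)) (fun x hx => ?_) (fun x hx => ?_)
      · rw [mem_filter] at hx
        exact ⟨hG a haG x hx.1 hx.2, (hGwin x hx.1).2⟩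
      · have := ((spacedIn_iff.1 h.2).2.1 x (List.mem_toFinset.1 hx)).1
        exact mem_filter.2 ⟨hlG (by simp [List.mem_toFinset.1 hx]), by omega⟩
    have hsplit : G ⊆ G.filter (· < a) ∪ ({a} ∪ G.filter (a < ·)) := by
      intro x hx
      simp only [mem_union, mem_filter, mem_singleton]
      rcases lt_trichotomy x a with hxa | hxa | hxa <;> simp [hx, hxa]
    have hcard := (card_le_card hsplit).trans (card_union_le _ _)
    have hcard' := card_union_le {a} (G.filter (a < ·))
    rw [card_singleton] at hcard'
    simp only [gaps, List.map_cons, List.sum_cons, List.length_cons]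
    omega

end SpacedIn

lemma spacedIn_ofGaps {lo top : ℕ} {g : List ℕ} (hg : g ≠ [])
    (hsum : lo + g.sum + 2 * g.length = top + 2) :
    SpacedIn lo top (ofGaps lo g) ∧ gaps lo top (ofGaps lo g) = g := by
  induction g generalizing lo with
  | nil => exact absurd rfl hg
  | cons x gs ih =>
    cases gs with
    | nil =>
      simp only [List.sum_cons, List.sum_nil, List.length_cons, List.length_nil] at hsum
      simp only [ofGaps, SpacedIn, gaps, List.cons.injEq, and_true]
      omega
    | cons y gs =>
      simp only [List.sum_cons, List.length_cons] at hsum ih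
      obtain ⟨hsp, hgaps⟩ := ih (lo := lo + x + 2) (by simp) (by omega)
      simp [ofGaps, SpacedIn, gaps, hsp, hgaps]

lemma List.sum_le_length_add_two_mul_sum_map_div_two (g : List ℕ) :
    g.sum ≤ g.length + 2 * (g.map (· / 2)).sum := by
  induction g with
  | nil => simp
  | cons x g ih => simp only [List.sum_cons, List.length_cons, List.map_cons]; omega

lemma List.ofFn_getD_eq {L : ℕ} {l : List ℕ} (hl : l.length = L) :
    List.ofFn (fun i : Fin L => l.getD i 0) = l :=
  List.ext_getElem (by simp [hl]) (fun i _ h => by simp [h])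

lemma SpacedIn.sort_toFinset {lo top : ℕ} {l : List ℕ} (h : SpacedIn lo top l) :
    l.toFinset.sort = l := by
  have hpw := (spacedIn_iff.1 h).2.2
  exact (List.toFinset_sort _ (hpw.imp fun hab => by omega)).2 (hpw.imp fun hab => by omega)

lemma separated_iff_pairwise_sort {F : Finset ℕ} :
    Separated F ↔ F.sort.Pairwise (fun a b => a + 2 ≤ b) := by
  constructor
  · intro hF
    exact ((F.pairwise_sort _).and (F.sort_nodup _)).imp_of_mem fun ha hb hab =>
      hF _ ((mem_sort _).1 ha) _ ((mem_sort _).1 hb) (lt_of_le_of_ne hab.1 hab.2)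
  · intro h i hi j hj hij
    obtain ⟨p, hp, rfl⟩ := List.getElem_of_mem ((mem_sort (· ≤ ·)).2 hi)
    obtain ⟨q, hq, rfl⟩ := List.getElem_of_mem ((mem_sort (· ≤ ·)).2 hj)
    rcases lt_trichotomy p q with hpq | rfl | hpq
    · exact List.pairwise_iff_getElem.1 h p q hp hq hpq
    · omega
    · have := List.pairwise_iff_getElem.1 h q p hq hp hpq; omega

lemma isFaceP_iff_spacedIn {n : ℕ} {F : Finset ℕ} : isFaceP n F ↔ SpacedIn 1 (n + 2) F.sort := by
  rw [isFaceP_iff, spacedIn_iff, separated_iff_pairwise_sort, subset_iff]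
  simp only [mem_sort, mem_Icc]
  constructor
  · rintro ⟨hF, hpw⟩
    exact ⟨by omega, fun x hx => ⟨(hF hx).1, by have := (hF hx).2; omega⟩, hpw⟩
  · rintro ⟨-, hF, hpw⟩
    exact ⟨fun x hx => ⟨(hF x hx).1, by have := (hF x hx).2; omega⟩, hpw⟩

def faceGaps (n : ℕ) (F : Finset ℕ) : List ℕ := gaps 1 (n + 2) F.sort

def halfGapSum (n : ℕ) (F : Finset ℕ) : ℕ := ((faceGaps n F).map (· / 2)).sum

section Faces

variable {n : ℕ} {F G : Finset ℕ}

lemma length_faceGaps : (faceGaps n F).length = #F + 1 := by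
  simp [faceGaps, length_gaps]

lemma sum_faceGaps (hF : isFaceP n F) : (faceGaps n F).sum + 2 * #F = n + 1 := by
  have := (isFaceP_iff_spacedIn.1 hF).sum_gaps
  rw [length_sort] at this
  simp only [faceGaps]
  omega

lemma le_three_mul_card_add_two_mul_halfGapSum (hF : isFaceP n F) :
    n ≤ 3 * #F + 2 * halfGapSum n F := by
  have := (faceGaps n F).sum_le_length_add_two_mul_sum_map_div_two
  rw [length_faceGaps] at this
  have := sum_faceGaps hF
  unfold halfGapSum
  omega

lemma exists_face_superset_card_eq (hF : isFaceP n F) :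
    ∃ G, isFaceP n G ∧ F ⊆ G ∧ #G = #F + halfGapSum n F := by
  obtain ⟨G, hG, hGwin, hFG, hcard⟩ := (isFaceP_iff_spacedIn.1 hF).exists_superset_card_eq
  refine ⟨G, ⟨fun x hx => ?_, hG⟩, by simpa using hFG, by simpa [halfGapSum, faceGaps] using hcard⟩
  have := hGwin x hx
  rw [mem_Icc]; omega

lemma card_le_of_face_superset (hF : isFaceP n F) (hG : isFaceP n G) (hFG : F ⊆ G) :
    #G ≤ #F + halfGapSum n F := by
  have := (isFaceP_iff_spacedIn.1 hF).card_le_of_superset hG.2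
    (fun x hx => by have := mem_Icc.1 (hG.1 hx); omega) (by simpa using hFG)
  simpa [halfGapSum, faceGaps] using this

lemma exists_facet_superset (hF : isFaceP n F) : ∃ G, isFacetP n G ∧ F ⊆ G := by
  obtain ⟨G, hG, hmax⟩ := ((Icc 1 n).powerset.filter fun t => isFaceP n t ∧ F ⊆ t).exists_max_image
      card ⟨F, mem_filter.2 ⟨mem_powerset.2 hF.1, hF, subset_rfl⟩⟩
  simp only [mem_filter, mem_powerset] at hG hmax
  refine ⟨G, ⟨hG.2.1, fun t ht hGt => ?_⟩, hG.2.2⟩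
  exact (eq_of_subset_of_card_le hGt (hmax t ⟨ht.1, ht, hG.2.2.trans hGt⟩)).symm

lemma isFacetP.halfGapSum_eq_zero (hF : isFacetP n F) : halfGapSum n F = 0 := by
  obtain ⟨G, hG, hFG, hcard⟩ := exists_face_superset_card_eq hF.1
  have := hF.2 G hG hFG
  subst this
  omega

lemma isFacetP.le_three_mul_card (hF : isFacetP n F) : n ≤ 3 * #F := by
  have := le_three_mul_card_add_two_mul_halfGapSum hF.1
  rw [hF.halfGapSum_eq_zero] at this
  omega

lemma exists_facet_card_eq_and_no_larger_iff {c : ℕ} (hc : 3 * c ≤ n + 2) (hF : isFaceP n F) :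
    ((∃ F', isFacetP n F' ∧ #F' = c ∧ F ⊆ F') ∧ ¬∃ F'', isFacetP n F'' ∧ c < #F'' ∧ F ⊆ F'') ↔
      #F + halfGapSum n F ≤ c := by
  constructor
  · rintro ⟨-, hnone⟩
    obtain ⟨G, hG, hFG, hGcard⟩ := exists_face_superset_card_eq hF
    obtain ⟨H, hH, hGH⟩ := exists_facet_superset hG
    have : #H ≤ c := not_lt.1 fun hlt => hnone ⟨H, hH, hlt, hFG.trans hGH⟩
    have := card_le_card hGH
    omega
  · intro hle
    have hbound : ∀ H, isFacetP n H → F ⊆ H → #H = c := fun H hH hFH => by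
      have := card_le_of_face_superset hF hH.1 hFH
      have := hH.le_three_mul_card
      omega
    obtain ⟨H, hH, hFH⟩ := exists_facet_superset hF
    refine ⟨⟨H, hH, hbound H hH hFH, hFH⟩, ?_⟩
    rintro ⟨H', hH', hlt, hFH'⟩
    exact hlt.ne' (hbound H' hH' hFH')

lemma isFaceP_and_faceGaps_ofGaps {g : List ℕ} (hg : g ≠ [])
    (hsum : 1 + g.sum + 2 * g.length = n + 4) :
    isFaceP n (ofGaps 1 g).toFinset ∧ faceGaps n (ofGaps 1 g).toFinset = g := by
  obtain ⟨hsp, hgaps⟩ := spacedIn_ofGaps (top := n + 2) hg hsum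
  rw [isFaceP_iff_spacedIn, faceGaps, hsp.sort_toFinset]
  exact ⟨hsp, hgaps⟩

end Faces

lemma sum_div_two_eq_sum_map_ofFn {L : ℕ} (x : Fin L → ℕ) :
    ∑ i, x i / 2 = ((List.ofFn x).map (· / 2)).sum := by
  rw [List.map_ofFn, List.sum_ofFn]; rfl

lemma card_filter_faces_eq_card_filter_piAntidiag {n m S : ℕ} (hS : S + 2 * m = n + 1)
    (P : ℕ → Prop) [DecidablePred P] :
    #{F ∈ (Icc 1 n).powerset | isFaceP n F ∧ #F = m ∧ P (halfGapSum n F)} =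
      #{x ∈ piAntidiag (univ : Finset (Fin (m + 1))) S | P (∑ i, x i / 2)} := by
  have hofFn : ∀ F, #F = m → List.ofFn (fun i : Fin (m + 1) => (faceGaps n F).getD i 0) =
      faceGaps n F := fun F hF => List.ofFn_getD_eq (by rw [length_faceGaps, hF])
  have hfaceGaps : ∀ x : Fin (m + 1) → ℕ, ∑ i, x i = S →
      isFaceP n (ofGaps 1 (List.ofFn x)).toFinset ∧
        faceGaps n (ofGaps 1 (List.ofFn x)).toFinset = List.ofFn x := fun x hx =>
    isFaceP_and_faceGaps_ofGaps (by simp) (by rw [List.sum_ofFn, List.length_ofFn, hx]; omega)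
  apply card_nbij' (fun F (i : Fin (m + 1)) => (faceGaps n F).getD i 0)
    (fun x => (ofGaps 1 (List.ofFn x)).toFinset)
  · intro F hF
    simp only [mem_coe, mem_filter, mem_powerset, mem_piAntidiag] at hF ⊢
    obtain ⟨-, hface, hcard, hP⟩ := hF
    rw [← List.sum_ofFn, sum_div_two_eq_sum_map_ofFn, hofFn F hcard]
    exact ⟨⟨by have := sum_faceGaps hface; omega, by simp⟩, hP⟩
  · intro x hx
    simp only [mem_coe, mem_filter, mem_powerset, mem_piAntidiag] at hx ⊢
    obtain ⟨hface, hgaps⟩ := hfaceGaps x hx.1.1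
    have hcard := (length_faceGaps (n := n) (F := (ofGaps 1 (List.ofFn x)).toFinset))
    rw [hgaps, List.length_ofFn] at hcard
    rw [halfGapSum, hgaps, ← sum_div_two_eq_sum_map_ofFn]
    exact ⟨hface.1, hface, by omega, hx.2⟩
  · intro F hF
    simp only [mem_coe, mem_filter, mem_powerset] at hF
    show (ofGaps 1 (List.ofFn fun i : Fin (m + 1) => (faceGaps n F).getD i 0)).toFinset = F
    rw [hofFn F hF.2.2.1, faceGaps, (isFaceP_iff_spacedIn.1 hF.2.1).ofGaps_gaps, sort_toFinset]
  · intro x hx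
    simp only [mem_coe, mem_filter, mem_piAntidiag] at hx
    funext i
    show (faceGaps n (ofGaps 1 (List.ofFn x)).toFinset).getD i 0 = x i
    rw [(hfaceGaps x hx.1.1).2]
    simp [-List.ofFn_succ, Nat.le_of_lt_succ i.2]

lemma card_filter_piAntidiag_sum_div_two_eq {L S c : ℕ} (hc : 2 * c ≤ S) :
    #{x ∈ piAntidiag (univ : Finset (Fin L)) S | ∑ i, x i / 2 = c} =
      L.choose (S - 2 * c) * (L + c - 1).choose c := by
  have hsplit : ∀ x : Fin L → ℕ,
      ∑ i, x i = 2 * ∑ i, x i / 2 + #{i | x i % 2 = 1} := fun x => by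
    rw [card_filter, mul_sum, ← sum_add_distrib]
    exact sum_congr rfl fun i _ => by split_ifs <;> omega
  suffices #{x ∈ piAntidiag (univ : Finset (Fin L)) S | ∑ i, x i / 2 = c} =
      #(powersetCard (S - 2 * c) (univ : Finset (Fin L)) ×ˢ
        finsuppAntidiag (univ : Finset (Fin L)) c) by
    rw [this, card_product, card_powersetCard, card_finsuppAntidiag_nat_eq_choose, card_univ,
      Fintype.card_fin]
  refine card_nbij'
    (fun x : Fin L → ℕ => (({i | x i % 2 = 1} : Finset (Fin L)),
      (Finsupp.equivFunOnFinite.symm fun i => x i / 2 : Fin L →₀ ℕ)))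
    (fun (p : Finset (Fin L) × (Fin L →₀ ℕ)) i => 2 * p.2 i + if i ∈ p.1 then 1 else 0)
    ?_ ?_ ?_ ?_
  · intro x hx
    simp only [mem_coe, mem_filter, mem_piAntidiag, mem_product, mem_powersetCard,
      mem_finsuppAntidiag, Finsupp.coe_equivFunOnFinite_symm] at hx ⊢
    have hsum : ∑ i, x i = S := hx.1.1
    have := hsplit x
    exact ⟨⟨subset_univ _, by omega⟩, hx.2, subset_univ _⟩
  · rintro ⟨s, f⟩ hp
    simp only [mem_coe, mem_filter, mem_piAntidiag, mem_product, mem_powersetCard,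
      mem_finsuppAntidiag] at hp ⊢
    have hdiv : ∀ i, (2 * f i + if i ∈ s then 1 else 0) / 2 = f i := fun i => by split_ifs <;> omega
    refine ⟨⟨?_, by simp⟩, by simp only [hdiv]; exact hp.2.1⟩
    rw [sum_add_distrib, ← mul_sum, sum_boole, hp.2.1]
    simp only [filter_mem_eq_inter, univ_inter, Nat.cast_id, hp.1.2]
    omega
  · intro x _
    funext i
    simp only [mem_filter, mem_univ, true_and, Finsupp.coe_equivFunOnFinite_symm]
    split_ifs <;> omega
  · rintro ⟨s, f⟩ _
    simp only [Prod.mk.injEq]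
    constructor
    · ext i
      simp only [mem_filter, mem_univ, true_and]
      split_ifs with h <;> simp [h]
    · ext i
      simp only [Finsupp.coe_equivFunOnFinite_symm]
      split_ifs <;> omega

lemma sum_le_add_two_mul_sum_div_two {L : ℕ} (x : Fin L → ℕ) :
    ∑ i, x i ≤ L + 2 * ∑ i, x i / 2 := by
  have := (List.ofFn x).sum_le_length_add_two_mul_sum_map_div_two
  rwa [List.sum_ofFn, List.length_ofFn, ← sum_div_two_eq_sum_map_ofFn] at this

lemma card_filter_faces_facet_conditions_eq {n c m S : ℕ} (hc : 3 * c ≤ n + 2)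
    (hS : S + 2 * m = n + 1) :
    #{F ∈ (Icc 1 n).powerset | isFaceP n F ∧ #F = m ∧
        (∃ F', isFacetP n F' ∧ #F' = c ∧ F ⊆ F') ∧ ¬∃ F'', isFacetP n F'' ∧ c < #F'' ∧ F ⊆ F''} =
      #{x ∈ piAntidiag (univ : Finset (Fin (m + 1))) S | m + ∑ i, x i / 2 ≤ c} := by
  rw [← card_filter_faces_eq_card_filter_piAntidiag hS (fun h => m + h ≤ c)]
  congr 1
  refine filter_congr fun F _ => and_congr_right fun hF => ?_
  rw [exists_facet_card_eq_and_no_larger_iff hc hF]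
  exact and_congr_right fun hm => by rw [hm]

lemma card_filter_piAntidiag_add_sum_div_two_le {L S m c t : ℕ} (h2t : 2 * t ≤ S)
    (hforced : ∀ h, S ≤ L + 2 * h → (m + h ≤ c ↔ h = t)) :
    #{x ∈ piAntidiag (univ : Finset (Fin L)) S | m + ∑ i, x i / 2 ≤ c} =
      L.choose (S - 2 * t) * (L + t - 1).choose t := by
  rw [← card_filter_piAntidiag_sum_div_two_eq h2t]
  congr 1
  exact filter_congr fun x hx =>
    hforced _ ((mem_piAntidiag.1 hx).1 ▸ sum_le_add_two_mul_sum_div_two x)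

/-- In `Δ_{3k+1}`: the number of `k`-element faces contained in some facet of cardinality
`k + 1` but in no facet of cardinality greater than `k + 1` is `(k+1)^2`; the number of
such `(k-1)`-element faces is `k(k+1)/2`; and every `(k-2)`-element face is contained in
a facet of cardinality greater than `k + 1`. -/
theorem faces_counts_path3k_add_one (k : ℕ) (hk : 1 ≤ k) :
    ((Finset.Icc 1 (3 * k + 1)).powerset.filter fun F =>
        isFaceP (3 * k + 1) F ∧ F.card = k ∧
          (∃ F', isFacetP (3 * k + 1) F' ∧ F'.card = k + 1 ∧ F ⊆ F') ∧
          ¬ ∃ F'', isFacetP (3 * k + 1) F'' ∧ k + 1 < F''.card ∧ F ⊆ F'').card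
        = (k + 1) ^ 2 ∧
      ((Finset.Icc 1 (3 * k + 1)).powerset.filter fun F =>
          isFaceP (3 * k + 1) F ∧ F.card + 1 = k ∧
            (∃ F', isFacetP (3 * k + 1) F' ∧ F'.card = k + 1 ∧ F ⊆ F') ∧
            ¬ ∃ F'', isFacetP (3 * k + 1) F'' ∧ k + 1 < F''.card ∧ F ⊆ F'').card
          = k * (k + 1) / 2 ∧
      ∀ F : Finset ℕ, isFaceP (3 * k + 1) F → F.card + 2 = k →
        ∃ F', isFacetP (3 * k + 1) F' ∧ k + 1 < F'.card ∧ F ⊆ F' := by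
  have hc : 3 * (k + 1) ≤ 3 * k + 1 + 2 := by omega
  refine ⟨?_, ?_, fun F hF hcard => ?_⟩
  · rw [card_filter_faces_facet_conditions_eq hc (m := k) (S := k + 2) (by omega),
      card_filter_piAntidiag_add_sum_div_two_le (t := 1) (by omega) (fun h hh => by omega)]
    simp [Nat.choose_succ_self_right, sq]
  · have hm : ∀ F : Finset ℕ, F.card + 1 = k ↔ F.card = k - 1 := fun F => by omega
    simp only [hm]
    rw [card_filter_faces_facet_conditions_eq hc (m := k - 1) (S := k + 4) (by omega),
      card_filter_piAntidiag_add_sum_div_two_le (t := 2) (by omega) (fun h hh => by omega),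
      show k - 1 + 1 = k by omega, show k + 4 - 2 * 2 = k by omega, show k + 2 - 1 = k + 1 by omega,
      Nat.choose_self, one_mul, Nat.choose_two_right, Nat.add_sub_cancel, mul_comm]
  · obtain ⟨G, hG, hFG, hGcard⟩ := exists_face_superset_card_eq hF
    have := le_three_mul_card_add_two_mul_halfGapSum hF
    obtain ⟨H, hH, hGH⟩ := exists_facet_superset hG
    exact ⟨H, hH, by have := card_le_card hGH; omega, hFG.trans hGH⟩
end
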